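/- Let X be a smooth cubic surface over a field k containing a k-rational line. Then Pic(X)/Δ is a quotient of Z/5, generated by the class of a fibre X_O of the conic bundle over a rational point O ∈ P¹(k). -/

import Mathlib

/-!
Model: the Picard group of a smooth cubic surface over a separably closed
field is identified with `ℤ⁷ = Fin 7 → ℤ` with its standard basis
`λ₀, L₁, …, L₆` (pullback of a line and the six exceptional classes),
intersection form `picInter`, canonical class `KX = -3λ₀ + L₁ + ⋯ + L₆`.
The classes of the 27 lines are exactly the classes `l` with
`l·l = -1` and `KX·l = -1`.
-/

def picInter (a b : Fin 7 → ℤ) : ℤ := a 0 * b 0 - ∑ i : Fin 6, a i.succ * b i.succ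

def KX : Fin 7 → ℤ := ![-3, 1, 1, 1, 1, 1, 1]

def IsLineClass (l : Fin 7 → ℤ) : Prop := picInter l l = -1 ∧ picInter KX l = -1

/-!
Galois model: for a smooth cubic surface `X` over a field `k`, split by a
finite Galois extension with group `G`, the Galois action on the geometric
Picard group is a homomorphism `ρ : G →* Multiplicative (AddAut (Fin 7 → ℤ))` preserving the
intersection form, the canonical class and the set of line classes.
`Pic(X)` is identified with the fixed subgroup `fixedSubgroup ρ`, and the
subgroup `Δ ⊆ Pic(X)` generated by norms (from finite separable extensions)
of lines is `Delta ρ`: the subgroup generated by the Galois-orbit sums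
(= norms from the field of definition) of the 27 line classes.
-/

variable {G : Type*} [Group G] [Fintype G]

noncomputable def normOrbit (ρ : G →* Multiplicative (AddAut (Fin 7 → ℤ))) (l : Fin 7 → ℤ) : Fin 7 → ℤ :=
  ∑ m ∈ Finset.image (fun g => Multiplicative.toAdd (ρ g) l) Finset.univ, m

noncomputable def Delta (ρ : G →* Multiplicative (AddAut (Fin 7 → ℤ))) : AddSubgroup (Fin 7 → ℤ) :=
  AddSubgroup.closure { x | ∃ l, IsLineClass l ∧ x = normOrbit ρ l }

def fixedSubgroup (ρ : G →* Multiplicative (AddAut (Fin 7 → ℤ))) : AddSubgroup (Fin 7 → ℤ) where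
  carrier := {x | ∀ g, Multiplicative.toAdd (ρ g) x = x}
  zero_mem' := fun g => map_zero (Multiplicative.toAdd (ρ g))
  add_mem' := fun {a b} ha hb g => by rw [map_add, ha g, hb g]
  neg_mem' := fun {a} ha g => by rw [map_neg, ha g]

/-!
The isometries of the lattice `(ℤ⁷, picInter)` fixing `KX` act transitively on the 27 lines: two
skew lines are exchanged by the reflection in their difference, and every line is joined to
`2λ₀ - L₁ - ⋯ - L₅` by at most two skewness steps. Conjugating the Galois action by such an
isometry transports `Δ`, so we may take `L = 2λ₀ - L₁ - ⋯ - L₅`. Its conic bundle is the pencil of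
lines through the sixth point: `F = λ₀ - L₆`, with degenerate fibres `Lᵢ + (F - Lᵢ)` for `i ≤ 5`.

The ten fibre components form a Galois-stable set of lines with sum `5F`, so `5F ∈ Δ`. An
invariant `y` with `y·F = 0` equals `(y·λ₀) F - ∑ᵢ (y·Lᵢ) Lᵢ`, and `∑ (l·y)⁺ l` over the ten
components differs from `∑ᵢ (y·Lᵢ) Lᵢ` by a multiple of `F` while being an invariant combination
of lines, hence in `Δ`. As `L ∈ Δ` and `L·F = 2`, this settles invariants of even degree on `F`.
For odd degree there is a Galois orbit of sections of odd size; subtracting its norm makes the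
degree even.
-/

lemma AddSubgroup.exists_sub_zsmul_mem_of_mem_sup_zmultiples {A : Type*} [AddCommGroup A]
    {H : AddSubgroup A} {F x : A} (hx : x ∈ H ⊔ AddSubgroup.zmultiples F) :
    ∃ n : ℤ, x - n • F ∈ H := by
  obtain ⟨y, hy, z, hz, rfl⟩ := AddSubgroup.mem_sup.1 hx
  obtain ⟨n, rfl⟩ := AddSubgroup.mem_zmultiples_iff.1 hz
  exact ⟨n, by simpa using hy⟩

namespace CubicSurface

open Finset

/-! ### The intersection form and the 27 lines -/

lemma picInter_comm (a b : Fin 7 → ℤ) : picInter a b = picInter b a := by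
  simp only [picInter, mul_comm]

def picForm : LinearMap.BilinForm ℤ (Fin 7 → ℤ) :=
  LinearMap.mk₂ ℤ picInter
    (fun a b c => by simp only [picInter, Pi.add_apply, add_mul, sum_add_distrib]; ring)
    (fun n a b => by simp only [picInter, Pi.smul_apply, smul_eq_mul, mul_assoc, ← mul_sum]; ring)
    (fun a b c => by simp only [picInter, Pi.add_apply, mul_add, sum_add_distrib]; ring)
    (fun n a b => by
      simp only [picInter, Pi.smul_apply, smul_eq_mul, mul_left_comm _ n, ← mul_sum]; ring)

lemma picForm_apply (a b : Fin 7 → ℤ) : picForm a b = picInter a b := rfl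

lemma picInter_add_left (a b c : Fin 7 → ℤ) :
    picInter (a + b) c = picInter a c + picInter b c := by
  simp only [← picForm_apply, map_add, LinearMap.add_apply]

lemma picInter_add_right (a b c : Fin 7 → ℤ) :
    picInter a (b + c) = picInter a b + picInter a c := by
  simp only [← picForm_apply, map_add]

lemma picInter_sub_left (a b c : Fin 7 → ℤ) :
    picInter (a - b) c = picInter a c - picInter b c := by
  simp only [← picForm_apply, map_sub, LinearMap.sub_apply]

lemma picInter_sub_right (a b c : Fin 7 → ℤ) :
    picInter a (b - c) = picInter a b - picInter a c := by
  simp only [← picForm_apply, map_sub]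

lemma picInter_neg_right (a b : Fin 7 → ℤ) : picInter a (-b) = -picInter a b := by
  simp only [← picForm_apply, map_neg]

lemma picInter_smul_right (a b : Fin 7 → ℤ) (n : ℤ) : picInter a (n • b) = n * picInter a b := by
  simp only [← picForm_apply, map_zsmul, smul_eq_mul]

lemma picInter_smul_left (a b : Fin 7 → ℤ) (n : ℤ) : picInter (n • a) b = n * picInter a b := by
  rw [picInter_comm, picInter_smul_right, picInter_comm]

lemma picInter_sum_left {ι : Type*} (s : Finset ι) (f : ι → Fin 7 → ℤ) (c : Fin 7 → ℤ) :
    picInter (∑ i ∈ s, f i) c = ∑ i ∈ s, picInter (f i) c := by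
  simp only [picInter_comm _ c, ← picForm_apply, map_sum]

/-- The classes `Lᵢ`, `λ₀ - Lᵢ - Lⱼ` and `2λ₀ - ∑ₖ Lₖ + Lᵢ`. -/
def lines27 : Finset (Fin 7 → ℤ) :=
  {![0, 0, 0, 0, 0, 0, 1], ![0, 0, 0, 0, 0, 1, 0], ![0, 0, 0, 0, 1, 0, 0],
   ![0, 0, 0, 1, 0, 0, 0], ![0, 0, 1, 0, 0, 0, 0], ![0, 1, 0, 0, 0, 0, 0],
   ![1, -1, -1, 0, 0, 0, 0], ![1, -1, 0, -1, 0, 0, 0], ![1, -1, 0, 0, -1, 0, 0],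
   ![1, -1, 0, 0, 0, -1, 0], ![1, -1, 0, 0, 0, 0, -1], ![1, 0, -1, -1, 0, 0, 0],
   ![1, 0, -1, 0, -1, 0, 0], ![1, 0, -1, 0, 0, -1, 0], ![1, 0, -1, 0, 0, 0, -1],
   ![1, 0, 0, -1, -1, 0, 0], ![1, 0, 0, -1, 0, -1, 0], ![1, 0, 0, -1, 0, 0, -1],
   ![1, 0, 0, 0, -1, -1, 0], ![1, 0, 0, 0, -1, 0, -1], ![1, 0, 0, 0, 0, -1, -1],
   ![2, -1, -1, -1, -1, -1, 0], ![2, -1, -1, -1, -1, 0, -1], ![2, -1, -1, -1, 0, -1, -1],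
   ![2, -1, -1, 0, -1, -1, -1], ![2, -1, 0, -1, -1, -1, -1], ![2, 0, -1, -1, -1, -1, -1]}

theorem isLineClass_of_mem_lines27 : ∀ l ∈ lines27, IsLineClass l := by
  unfold IsLineClass; decide

theorem mem_lines27_of_coords_mem_Icc : ∀ a ∈ Icc (0 : ℤ) 2, ∀ b₁ ∈ Icc (-1 : ℤ) 1,
    ∀ b₂ ∈ Icc (-1 : ℤ) 1, ∀ b₃ ∈ Icc (-1 : ℤ) 1, ∀ b₄ ∈ Icc (-1 : ℤ) 1,
    ∀ b₅ ∈ Icc (-1 : ℤ) 1, ∀ b₆ ∈ Icc (-1 : ℤ) 1,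
    IsLineClass ![a, b₁, b₂, b₃, b₄, b₅, b₆] → ![a, b₁, b₂, b₃, b₄, b₅, b₆] ∈ lines27 := by
  unfold IsLineClass; decide

lemma coords_mem_Icc_of_isLineClass {l : Fin 7 → ℤ} (h : IsLineClass l) :
    l 0 ∈ Icc 0 2 ∧ ∀ i : Fin 6, l i.succ ∈ Icc (-1) 1 := by
  obtain ⟨hsq, hK⟩ := h
  have hKsucc : ∀ i : Fin 6, KX i.succ = 1 := by decide
  simp only [picInter, hKsucc, one_mul] at hsq hK
  change -3 * l 0 - _ = _ at hK
  set b := fun i : Fin 6 => l i.succ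
  have hcs : (∑ i, b i) ^ 2 ≤ 6 * ∑ i, b i ^ 2 := by
    simpa using sq_sum_le_card_mul_sum_sq (s := univ) (f := b)
  simp only [sq] at hcs
  have ha : 0 ≤ l 0 ∧ l 0 ≤ 2 := by constructor <;> nlinarith
  refine ⟨mem_Icc.2 ha, fun i => ?_⟩
  -- `∑ bᵢ² = |∑ bᵢ|` for `l 0 ∈ {0, 1, 2}`, so every `bᵢ` is `0` or `±1` with a common sign
  obtain ha0 | ha12 : l 0 = 0 ∨ 1 ≤ l 0 := by omega
  · have hsum : ∑ j, b j * (b j - 1) = 0 := by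
      simp only [mul_sub, mul_one, sum_sub_distrib]; rw [ha0] at hsq hK; linarith
    have := (sum_eq_zero_iff_of_nonneg fun j _ => ?_).1 hsum i (mem_univ i)
    · exact mem_Icc.2 ⟨by nlinarith, by nlinarith⟩
    · rcases le_or_gt (b j) 0 with h | h <;> nlinarith
  · have hsum : ∑ j, b j * (b j + 1) = 0 := by
      simp only [mul_add, mul_one, sum_add_distrib]; nlinarith
    have := (sum_eq_zero_iff_of_nonneg fun j _ => ?_).1 hsum i (mem_univ i)
    · exact mem_Icc.2 ⟨by nlinarith, by nlinarith⟩
    · rcases le_or_gt 0 (b j) with h | h <;> nlinarith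

theorem isLineClass_iff_mem_lines27 {l : Fin 7 → ℤ} : IsLineClass l ↔ l ∈ lines27 := by
  refine ⟨fun h => ?_, isLineClass_of_mem_lines27 l⟩
  obtain ⟨ha, hb⟩ := coords_mem_Icc_of_isLineClass h
  have hl : l = ![l 0, l 1, l 2, l 3, l 4, l 5, l 6] := by ext i; fin_cases i <;> rfl
  rw [hl] at h ⊢
  exact mem_lines27_of_coords_mem_Icc _ ha _ (hb 0) _ (hb 1) _ (hb 2) _ (hb 3) _ (hb 4) _ (hb 5) h

def fibreClass (L : Fin 7 → ℤ) : Fin 7 → ℤ := -KX - L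

lemma picInter_fibreClass {l : Fin 7 → ℤ} (hl : IsLineClass l) (L : Fin 7 → ℤ) :
    picInter l (fibreClass L) = 1 - picInter l L := by
  rw [fibreClass, picInter_sub_right, picInter_neg_right, picInter_comm, hl.2]
  ring

lemma picInter_self_fibreClass {L : Fin 7 → ℤ} (hL : IsLineClass L) :
    picInter L (fibreClass L) = 2 := by
  rw [picInter_fibreClass hL, hL.1]; norm_num

def fibreComponents (L : Fin 7 → ℤ) : Finset (Fin 7 → ℤ) := lines27.filter (picInter · L = 1)

def sectionLines (L : Fin 7 → ℤ) : Finset (Fin 7 → ℤ) := lines27.filter (picInter · L = 0)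

lemma mem_fibreComponents {L l : Fin 7 → ℤ} :
    l ∈ fibreComponents L ↔ IsLineClass l ∧ picInter l L = 1 := by
  rw [fibreComponents, mem_filter, isLineClass_iff_mem_lines27]

lemma mem_sectionLines {L l : Fin 7 → ℤ} :
    l ∈ sectionLines L ↔ IsLineClass l ∧ picInter l L = 0 := by
  rw [sectionLines, mem_filter, isLineClass_iff_mem_lines27]

/-! ### Isometries fixing the canonical class -/

structure IsKIsometry (σ : AddAut (Fin 7 → ℤ)) : Prop where
  picInter_apply : ∀ a b, picInter (σ a) (σ b) = picInter a b
  apply_KX : σ KX = KX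

namespace IsKIsometry

variable {σ τ : AddAut (Fin 7 → ℤ)}

lemma isLineClass_apply (hσ : IsKIsometry σ) {l : Fin 7 → ℤ} (hl : IsLineClass l) :
    IsLineClass (σ l) := by
  rw [IsLineClass, hσ.picInter_apply, ← hσ.apply_KX, hσ.picInter_apply]
  exact hl

lemma symm (hσ : IsKIsometry σ) : IsKIsometry σ.symm where
  picInter_apply a b := by rw [← hσ.picInter_apply, σ.apply_symm_apply, σ.apply_symm_apply]
  apply_KX := by rw [AddEquiv.symm_apply_eq, hσ.apply_KX]

lemma trans (hσ : IsKIsometry σ) (hτ : IsKIsometry τ) : IsKIsometry (σ.trans τ) where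
  picInter_apply a b := by simp only [AddEquiv.trans_apply, hτ.picInter_apply, hσ.picInter_apply]
  apply_KX := by rw [AddEquiv.trans_apply, hσ.apply_KX, hτ.apply_KX]

lemma apply_fibreClass (hσ : IsKIsometry σ) (L : Fin 7 → ℤ) :
    σ (fibreClass L) = fibreClass (σ L) := by
  rw [fibreClass, fibreClass, map_sub, map_neg, hσ.apply_KX]

end IsKIsometry

def reflection (r : Fin 7 → ℤ) (hr : picInter r r = -2) : AddAut (Fin 7 → ℤ) where
  toFun x := x + picInter x r • r
  invFun x := x + picInter x r • r
  left_inv x := by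
    simp only [picInter_comm _ r, picInter_add_right, picInter_smul_right, hr]
    module
  right_inv x := by
    simp only [picInter_comm _ r, picInter_add_right, picInter_smul_right, hr]
    module
  map_add' x y := by
    simp only [picInter_comm _ r, picInter_add_right]
    module

lemma reflection_apply (r : Fin 7 → ℤ) (hr : picInter r r = -2) (x : Fin 7 → ℤ) :
    reflection r hr x = x + picInter x r • r := rfl

lemma isKIsometry_reflection {r : Fin 7 → ℤ} (hr : picInter r r = -2)
    (hrK : picInter KX r = 0) : IsKIsometry (reflection r hr) where
  picInter_apply a b := by
    simp only [reflection_apply, picInter_add_left, picInter_add_right, picInter_smul_left,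
      picInter_smul_right, picInter_comm r b, hr]
    ring
  apply_KX := by rw [reflection_apply, hrK, zero_smul, add_zero]

lemma exists_isKIsometry_of_skew {L M : Fin 7 → ℤ} (hL : IsLineClass L) (hM : IsLineClass M)
    (hLM : picInter M L = 0) : ∃ σ, IsKIsometry σ ∧ σ M = L := by
  have hr : picInter (L - M) (L - M) = -2 := by
    simp only [picInter_sub_left, picInter_sub_right, hL.1, hM.1, hLM, picInter_comm L M]
    norm_num
  have hrK : picInter KX (L - M) = 0 := by rw [picInter_sub_right, hL.2, hM.2]; norm_num
  refine ⟨reflection _ hr, isKIsometry_reflection hr hrK, ?_⟩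
  rw [reflection_apply, picInter_sub_right, hLM, hM.1]
  module

/-- The conic through the first five blown-up points. -/
def baseLine : Fin 7 → ℤ := ![2, -1, -1, -1, -1, -1, 0]

theorem isLineClass_baseLine : IsLineClass baseLine :=
  isLineClass_of_mem_lines27 _ (by decide)

theorem lines27_skew_connected : ∀ l ∈ lines27, l = baseLine ∨ picInter baseLine l = 0 ∨
    ∃ m ∈ lines27, picInter baseLine m = 0 ∧ picInter m l = 0 := by
  decide

lemma exists_isKIsometry_apply_baseLine {L : Fin 7 → ℤ} (hL : IsLineClass L) :
    ∃ σ, IsKIsometry σ ∧ σ baseLine = L := by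
  rcases lines27_skew_connected L (isLineClass_iff_mem_lines27.1 hL) with
    rfl | h | ⟨m, hm, h₁, h₂⟩
  · exact ⟨AddEquiv.refl _, ⟨fun _ _ => rfl, rfl⟩, rfl⟩
  · exact exists_isKIsometry_of_skew hL isLineClass_baseLine h
  · have hm := isLineClass_iff_mem_lines27.2 hm
    obtain ⟨σ, hσ, hσm⟩ := exists_isKIsometry_of_skew hm isLineClass_baseLine h₁
    obtain ⟨τ, hτ, hτL⟩ := exists_isKIsometry_of_skew hL hm h₂
    exact ⟨σ.trans τ, hσ.trans hτ, by rw [AddEquiv.trans_apply, hσm, hτL]⟩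

/-! ### The degenerate fibres over `baseLine` -/

local notation "F₀" => fibreClass baseLine

def baseComponents : Finset (Fin 7 → ℤ) :=
  {![0, 1, 0, 0, 0, 0, 0], ![0, 0, 1, 0, 0, 0, 0], ![0, 0, 0, 1, 0, 0, 0],
   ![0, 0, 0, 0, 1, 0, 0], ![0, 0, 0, 0, 0, 1, 0]}

theorem fibreComponents_baseLine :
    fibreComponents baseLine = baseComponents ∪ baseComponents.image (F₀ - ·) := by
  decide

theorem disjoint_baseComponents : Disjoint baseComponents (baseComponents.image (F₀ - ·)) := by
  decide

lemma sum_fibreComponents_baseLine {M : Type*} [AddCommMonoid M] (f : (Fin 7 → ℤ) → M) :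
    ∑ l ∈ fibreComponents baseLine, f l = ∑ l ∈ baseComponents, (f l + f (F₀ - l)) := by
  rw [fibreComponents_baseLine, sum_union disjoint_baseComponents,
    sum_image fun a _ b _ h => sub_right_injective h, sum_add_distrib]

lemma add_sum_picInter_smul_baseComponents {y : Fin 7 → ℤ} (hy : picInter F₀ y = 0) :
    y + ∑ l ∈ baseComponents, picInter l y • l = y 0 • F₀ := by
  have hF : F₀ = ![1, 0, 0, 0, 0, 0, -1] := by decide
  rw [hF] at hy ⊢
  simp [baseComponents, sum_insert, picInter, Fin.sum_univ_succ] at hy ⊢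
  ext i; fin_cases i <;> simp
  linarith

/-- Whichever component of each degenerate fibre is chosen, an odd number of the sixteen sections
meets at most one of the chosen components. -/
theorem odd_card_sectionLines_filter : ∀ T ∈ baseComponents.powerset,
    Odd #((sectionLines baseLine).filter fun s =>
      picInter s (∑ l ∈ baseComponents, if l ∈ T then l else F₀ - l) ≤ 1) := by
  decide

/-! ### Galois-stable sets of lines -/

section

omit [Fintype G]

instance : CoeFun (Multiplicative (AddAut (Fin 7 → ℤ))) (fun _ => (Fin 7 → ℤ) → Fin 7 → ℤ) :=
  ⟨fun f => ⇑(Multiplicative.toAdd f)⟩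

variable {ρ : G →* Multiplicative (AddAut (Fin 7 → ℤ))}

lemma apply_mul (g h : G) (v : Fin 7 → ℤ) : ρ (g * h) v = ρ g (ρ h v) := by
  rw [map_mul]; rfl

lemma apply_inv_apply (g : G) (v : Fin 7 → ℤ) : ρ g⁻¹ (ρ g v) = v := by
  rw [← apply_mul, inv_mul_cancel, map_one]; rfl

def IsStable (ρ : G →* Multiplicative (AddAut (Fin 7 → ℤ))) (T : Finset (Fin 7 → ℤ)) : Prop :=
  ∀ g, ∀ l ∈ T, ρ g l ∈ T

namespace IsStable

variable {T : Finset (Fin 7 → ℤ)}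

lemma filter (hT : IsStable ρ T) {p : (Fin 7 → ℤ) → Prop} [DecidablePred p]
    (hp : ∀ g l, p (ρ g l) ↔ p l) : IsStable ρ (T.filter p) := fun g l hl => by
  rw [mem_filter] at hl ⊢
  exact ⟨hT g l hl.1, (hp g l).2 hl.2⟩

lemma sdiff (hT : IsStable ρ T) {U : Finset (Fin 7 → ℤ)} (hU : IsStable ρ U) :
    IsStable ρ (T \ U) := fun g l hl => by
  rw [mem_sdiff] at hl ⊢
  refine ⟨hT g l hl.1, fun h => hl.2 ?_⟩
  simpa only [apply_inv_apply] using hU g⁻¹ _ h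

lemma apply_sum (hT : IsStable ρ T) (g : G) : ρ g (∑ l ∈ T, l) = ∑ l ∈ T, l := by
  have hinj : Function.Injective (ρ g) := (Multiplicative.toAdd (ρ g)).injective
  have himage : T.image (ρ g) = T :=
    eq_of_subset_of_card_le (image_subset_iff.2 (hT g)) (card_image_of_injective T hinj).ge
  rw [map_sum]
  conv_rhs => rw [← himage]
  rw [sum_image fun a _ b _ h => hinj h]

end IsStable

lemma picInter_apply_left_of_apply_eq (hρ : ∀ g, IsKIsometry (Multiplicative.toAdd (ρ g)))
    {g : G} {x : Fin 7 → ℤ} (hx : ρ g x = x) (l : Fin 7 → ℤ) :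
    picInter (ρ g l) x = picInter l x := by
  conv_lhs => rw [← hx]
  exact (hρ g).picInter_apply l x

lemma isStable_lines27 (hρ : ∀ g, IsKIsometry (Multiplicative.toAdd (ρ g))) :
    IsStable ρ lines27 := fun g _ hl =>
  isLineClass_iff_mem_lines27.1 ((hρ g).isLineClass_apply (isLineClass_iff_mem_lines27.2 hl))

lemma isStable_fibreComponents (hρ : ∀ g, IsKIsometry (Multiplicative.toAdd (ρ g)))
    {L : Fin 7 → ℤ} (hL : ∀ g, ρ g L = L) : IsStable ρ (fibreComponents L) :=
  (isStable_lines27 hρ).filter fun g _ => by rw [picInter_apply_left_of_apply_eq hρ (hL g)]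

lemma isStable_sectionLines (hρ : ∀ g, IsKIsometry (Multiplicative.toAdd (ρ g)))
    {L : Fin 7 → ℤ} (hL : ∀ g, ρ g L = L) : IsStable ρ (sectionLines L) :=
  (isStable_lines27 hρ).filter fun g _ => by rw [picInter_apply_left_of_apply_eq hρ (hL g)]

def conjRep (σ : AddAut (Fin 7 → ℤ)) (ρ : G →* Multiplicative (AddAut (Fin 7 → ℤ))) :
    G →* Multiplicative (AddAut (Fin 7 → ℤ)) :=
  (MulAut.conj (Multiplicative.ofAdd (-σ))).toMonoidHom.comp ρ

variable {σ : AddAut (Fin 7 → ℤ)}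

lemma conjRep_apply (g : G) (v : Fin 7 → ℤ) : conjRep σ ρ g v = σ.symm (ρ g (σ v)) := rfl

lemma isKIsometry_conjRep (hσ : IsKIsometry σ)
    (hρ : ∀ g, IsKIsometry (Multiplicative.toAdd (ρ g))) (g : G) :
    IsKIsometry (Multiplicative.toAdd (conjRep σ ρ g)) :=
  (hσ.trans (hρ g)).trans hσ.symm

end

def orbitFinset (ρ : G →* Multiplicative (AddAut (Fin 7 → ℤ))) (l : Fin 7 → ℤ) :
    Finset (Fin 7 → ℤ) :=
  univ.image fun g => ρ g l

variable {ρ : G →* Multiplicative (AddAut (Fin 7 → ℤ))}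

lemma normOrbit_eq_sum (l : Fin 7 → ℤ) : normOrbit ρ l = ∑ m ∈ orbitFinset ρ l, m := rfl

lemma mem_orbitFinset {l m : Fin 7 → ℤ} : m ∈ orbitFinset ρ l ↔ ∃ g, ρ g l = m := by
  simp [orbitFinset]

lemma mem_orbitFinset_self (l : Fin 7 → ℤ) : l ∈ orbitFinset ρ l :=
  mem_orbitFinset.2 ⟨1, by rw [map_one]; rfl⟩

lemma isStable_orbitFinset (l : Fin 7 → ℤ) : IsStable ρ (orbitFinset ρ l) := by
  intro g m hm
  obtain ⟨h, rfl⟩ := mem_orbitFinset.1 hm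
  exact mem_orbitFinset.2 ⟨g * h, apply_mul g h l⟩

namespace IsStable

variable {T : Finset (Fin 7 → ℤ)}

lemma orbitFinset_subset (hT : IsStable ρ T) {l : Fin 7 → ℤ} (hl : l ∈ T) :
    orbitFinset ρ l ⊆ T := by
  intro m hm
  obtain ⟨g, rfl⟩ := mem_orbitFinset.1 hm
  exact hT g l hl

lemma induction_on {P : Finset (Fin 7 → ℤ) → Prop} (hT : IsStable ρ T) (empty : P ∅)
    (step : ∀ T l, IsStable ρ T → l ∈ T → P (T \ orbitFinset ρ l) → P T) : P T := by
  induction T using Finset.strongInduction with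
  | H T ih =>
    rcases T.eq_empty_or_nonempty with rfl | ⟨l, hl⟩
    · exact empty
    · refine step T l hT hl (ih _ ?_ (hT.sdiff (isStable_orbitFinset l)))
      exact sdiff_ssubset (hT.orbitFinset_subset hl) ⟨l, mem_orbitFinset_self l⟩

lemma exists_odd_card_orbitFinset (hT : IsStable ρ T) (hodd : Odd #T) :
    ∃ l ∈ T, Odd #(orbitFinset ρ l) := by
  refine hT.induction_on (P := fun T => Odd #T → ∃ l ∈ T, Odd #(orbitFinset ρ l))
    (by simp) (fun T l hT hl ih hodd => ?_) hodd
  by_cases hl_odd : Odd #(orbitFinset ρ l)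
  · exact ⟨l, hl, hl_odd⟩
  · have hsub := hT.orbitFinset_subset hl
    obtain ⟨m, hm, hm_odd⟩ := ih <| by
      rw [card_sdiff_of_subset hsub, Nat.odd_sub (card_le_card hsub)]
      exact iff_of_true hodd (Nat.not_odd_iff_even.1 hl_odd)
    exact ⟨m, (mem_sdiff.1 hm).1, hm_odd⟩

end IsStable

lemma normOrbit_mem_Delta {l : Fin 7 → ℤ} (hl : IsLineClass l) : normOrbit ρ l ∈ Delta ρ :=
  AddSubgroup.subset_closure ⟨l, hl, rfl⟩

lemma mem_Delta_of_forall_apply_eq {l : Fin 7 → ℤ} (hl : IsLineClass l)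
    (hfix : ∀ g, ρ g l = l) : l ∈ Delta ρ := by
  have horbit : orbitFinset ρ l = {l} := by
    simp only [orbitFinset, hfix, image_const univ_nonempty]
  simpa [normOrbit_eq_sum, horbit] using normOrbit_mem_Delta (ρ := ρ) hl

lemma sum_smul_mem_Delta {T : Finset (Fin 7 → ℤ)} (hT : IsStable ρ T)
    (hlines : ∀ l ∈ T, IsLineClass l) (f : (Fin 7 → ℤ) → ℤ) (hf : ∀ g l, f (ρ g l) = f l) :
    ∑ l ∈ T, f l • l ∈ Delta ρ := by
  refine hT.induction_on (P := fun T => (∀ l ∈ T, IsLineClass l) → ∑ l ∈ T, f l • l ∈ Delta ρ)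
    (by simp) (fun T l hT hl ih hlines => ?_) hlines
  have hsub := hT.orbitFinset_subset hl
  have horbit : ∑ m ∈ orbitFinset ρ l, f m • m = f l • normOrbit ρ l := by
    rw [normOrbit_eq_sum, smul_sum]
    refine sum_congr rfl fun m hm => ?_
    obtain ⟨g, rfl⟩ := mem_orbitFinset.1 hm
    rw [hf]
  rw [← sum_sdiff hsub, horbit]
  exact add_mem (ih fun m hm => hlines m (mem_sdiff.1 hm).1)
    (zsmul_mem (normOrbit_mem_Delta (hlines l hl)) _)

variable {σ : AddAut (Fin 7 → ℤ)}

lemma normOrbit_conjRep (l : Fin 7 → ℤ) :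
    normOrbit (conjRep σ ρ) l = σ.symm (normOrbit ρ (σ l)) := by
  have himage : orbitFinset (conjRep σ ρ) l = (orbitFinset ρ (σ l)).image σ.symm := by
    rw [orbitFinset, orbitFinset, image_image]; rfl
  rw [normOrbit_eq_sum, normOrbit_eq_sum, himage, map_sum,
    sum_image fun a _ b _ h => σ.symm.injective h]

lemma IsKIsometry.apply_mem_Delta (hσ : IsKIsometry σ) {v : Fin 7 → ℤ}
    (hv : v ∈ Delta (conjRep σ ρ)) : σ v ∈ Delta ρ := by
  suffices Delta (conjRep σ ρ) ≤ (Delta ρ).comap σ.toAddMonoidHom from this hv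
  rw [Delta, AddSubgroup.closure_le]
  rintro _ ⟨l, hl, rfl⟩
  simpa [normOrbit_conjRep] using normOrbit_mem_Delta (ρ := ρ) (hσ.isLineClass_apply hl)

/-! ### The theorem for `baseLine` -/

section

variable (hρ : ∀ g, IsKIsometry (Multiplicative.toAdd (ρ g)))
  (hfix : ∀ g, ρ g baseLine = baseLine)
include hρ hfix

lemma five_smul_fibreClass_baseLine_mem_Delta : (5 : ℤ) • F₀ ∈ Delta ρ := by
  have hsum : ∑ l ∈ fibreComponents baseLine, (1 : ℤ) • l = (5 : ℤ) • F₀ := by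
    rw [sum_fibreComponents_baseLine]
    simp only [one_smul, add_sub_cancel, sum_const, show #baseComponents = 5 by decide]
    exact (natCast_zsmul F₀ 5).symm
  rw [← hsum]
  exact sum_smul_mem_Delta (isStable_fibreComponents hρ hfix)
    (fun l hl => (mem_fibreComponents.1 hl).1) (fun _ => 1) fun _ _ => rfl

lemma mem_sup_of_picInter_fibreClass_eq_zero {y : Fin 7 → ℤ} (hy : ∀ g, ρ g y = y)
    (hyF : picInter F₀ y = 0) : y ∈ Delta ρ ⊔ AddSubgroup.zmultiples F₀ := by
  have hΔ := sum_smul_mem_Delta (isStable_fibreComponents hρ hfix)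
    (fun l hl => (mem_fibreComponents.1 hl).1) (fun l => (picInter l y)⁺)
    fun g l => by rw [picInter_apply_left_of_apply_eq hρ (hy g)]
  have hpair : ∀ l, (picInter l y)⁺ • l + (picInter (F₀ - l) y)⁺ • (F₀ - l)
      = picInter l y • l + (picInter l y)⁻ • F₀ := fun l => by
    rw [picInter_sub_left, hyF, zero_sub, posPart_neg]
    calc _ = ((picInter l y)⁺ - (picInter l y)⁻) • l + (picInter l y)⁻ • F₀ := by module
      _ = _ := by rw [posPart_sub_negPart]
  have hsum : ∑ l ∈ fibreComponents baseLine, (picInter l y)⁺ • l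
      = ∑ l ∈ baseComponents, picInter l y • l
        + (∑ l ∈ baseComponents, (picInter l y)⁻) • F₀ := by
    rw [sum_fibreComponents_baseLine, sum_congr rfl fun l _ => hpair l, sum_add_distrib,
      sum_smul]
  have hy' : y = (y 0 + ∑ l ∈ baseComponents, (picInter l y)⁻) • F₀
      - ∑ l ∈ fibreComponents baseLine, (picInter l y)⁺ • l := by
    rw [hsum, add_smul, ← add_sum_picInter_smul_baseComponents hyF]; abel
  rw [hy']
  exact sub_mem (AddSubgroup.mem_sup_right (AddSubgroup.zsmul_mem_zmultiples _ _))
    (AddSubgroup.mem_sup_left hΔ)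

lemma mem_sup_of_even {x : Fin 7 → ℤ} (hx : ∀ g, ρ g x = x) (he : Even (picInter F₀ x)) :
    x ∈ Delta ρ ⊔ AddSubgroup.zmultiples F₀ := by
  obtain ⟨e, he⟩ := he
  have hy : picInter F₀ (x - e • baseLine) = 0 := by
    rw [picInter_sub_right, picInter_smul_right, picInter_comm F₀ baseLine,
      picInter_self_fibreClass isLineClass_baseLine, he]
    ring
  have hyfix : ∀ g, ρ g (x - e • baseLine) = x - e • baseLine := fun g => by
    rw [map_sub, map_zsmul, hx, hfix]
  have hbase := mem_Delta_of_forall_apply_eq isLineClass_baseLine hfix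
  simpa using add_mem (mem_sup_of_picInter_fibreClass_eq_zero hρ hfix hyfix hy)
    (AddSubgroup.mem_sup_left (zsmul_mem hbase e))

/-- Choose in each degenerate fibre the component meeting `x` less than the other one (they meet
it `x·F₀` times in total, an odd number). The sum `w` of the chosen components is invariant, so
the sections meeting `w` at most once form a stable set, of odd size by
`odd_card_sectionLines_filter`. -/
lemma exists_mem_sectionLines_odd_card_orbitFinset {x : Fin 7 → ℤ} (hx : ∀ g, ρ g x = x)
    (hodd : Odd (picInter F₀ x)) : ∃ s ∈ sectionLines baseLine, Odd #(orbitFinset ρ s) := by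
  set p : (Fin 7 → ℤ) → Prop := fun l => 2 * picInter l x < picInter F₀ x
  have hp : ∀ l, p (F₀ - l) ↔ ¬ p l := fun l => by
    obtain ⟨k, hk⟩ := hodd
    simp only [p, picInter_sub_left, hk]
    omega
  set w := ∑ l ∈ (fibreComponents baseLine).filter p, l with hw_def
  have hw : w = ∑ l ∈ baseComponents, if l ∈ baseComponents.filter p then l else F₀ - l := by
    rw [hw_def, sum_filter, sum_fibreComponents_baseLine]
    refine sum_congr rfl fun l hl => ?_
    by_cases h : p l
    · rw [if_pos h, if_neg fun h' => (hp l).1 h' h, add_zero, if_pos (mem_filter.2 ⟨hl, h⟩)]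
    · rw [if_neg h, if_pos ((hp l).2 h), zero_add, if_neg fun h' => h (mem_filter.1 h').2]
  have hwfix : ∀ g, ρ g w = w := ((isStable_fibreComponents hρ hfix).filter fun g l => by
    simp only [p, picInter_apply_left_of_apply_eq hρ (hx g)]).apply_sum
  set W := (sectionLines baseLine).filter fun s => picInter s w ≤ 1
  have hW : IsStable ρ W := (isStable_sectionLines hρ hfix).filter fun g s => by
    rw [picInter_apply_left_of_apply_eq hρ (hwfix g)]
  have hW_odd : Odd #W := by
    simpa only [W, hw] using odd_card_sectionLines_filter _ (mem_powerset.2 (filter_subset p _))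
  obtain ⟨s, hs, hs_odd⟩ := hW.exists_odd_card_orbitFinset hW_odd
  exact ⟨s, (mem_filter.1 hs).1, hs_odd⟩

lemma mem_sup_of_forall_apply_eq {x : Fin 7 → ℤ} (hx : ∀ g, ρ g x = x) :
    x ∈ Delta ρ ⊔ AddSubgroup.zmultiples F₀ := by
  rcases Int.even_or_odd (picInter F₀ x) with he | ho
  · exact mem_sup_of_even hρ hfix hx he
  obtain ⟨s, hs, hs_odd⟩ := exists_mem_sectionLines_odd_card_orbitFinset hρ hfix hx ho
  have hdeg : picInter F₀ (normOrbit ρ s) = #(orbitFinset ρ s) := by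
    rw [picInter_comm, normOrbit_eq_sum, picInter_sum_left, card_eq_sum_ones, Nat.cast_sum]
    refine sum_congr rfl fun m hm => ?_
    obtain ⟨hm_line, hm_L⟩ :=
      mem_sectionLines.1 ((isStable_sectionLines hρ hfix).orbitFinset_subset hs hm)
    rw [picInter_fibreClass hm_line, hm_L, Nat.cast_one, sub_zero]
  have hNfix : ∀ g, ρ g (normOrbit ρ s) = normOrbit ρ s := (isStable_orbitFinset s).apply_sum
  have hx' : x - normOrbit ρ s ∈ Delta ρ ⊔ AddSubgroup.zmultiples F₀ := by
    refine mem_sup_of_even hρ hfix (fun g => by rw [map_sub, hx, hNfix]) ?_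
    rw [picInter_sub_right, hdeg]
    exact ho.sub_odd hs_odd.natCast
  simpa using add_mem hx'
    (AddSubgroup.mem_sup_left (normOrbit_mem_Delta (mem_sectionLines.1 hs).1))

end

end CubicSurface

open CubicSurface

theorem stmt9_general
    (ρ : G →* Multiplicative (AddAut (Fin 7 → ℤ)))
    (hint : ∀ (g : G) (a b : Fin 7 → ℤ), picInter (Multiplicative.toAdd (ρ g) a) (Multiplicative.toAdd (ρ g) b) = picInter a b)
    (hK : ∀ g : G, Multiplicative.toAdd (ρ g) KX = KX)
    (L : Fin 7 → ℤ) (hL : IsLineClass L) (hLfix : ∀ g : G, Multiplicative.toAdd (ρ g) L = L) :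
    (5 : ℤ) • (-KX - L) ∈ Delta ρ ∧
      ∀ x ∈ fixedSubgroup ρ, ∃ n : ℤ, x - n • (-KX - L) ∈ Delta ρ := by
  have hρ : ∀ g, IsKIsometry (Multiplicative.toAdd (ρ g)) := fun g => ⟨hint g, hK g⟩
  obtain ⟨σ, hσ, rfl⟩ := exists_isKIsometry_apply_baseLine hL
  have hρ' := isKIsometry_conjRep hσ hρ
  have hfix' : ∀ g, conjRep σ ρ g baseLine = baseLine := fun g => by
    rw [conjRep_apply, hLfix, AddEquiv.symm_apply_apply]
  have hF : σ (fibreClass baseLine) = -KX - σ baseLine := hσ.apply_fibreClass baseLine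
  refine ⟨?_, fun x hx => ?_⟩
  · have h := hσ.apply_mem_Delta (five_smul_fibreClass_baseLine_mem_Delta hρ' hfix')
    rwa [map_zsmul, hF] at h
  · have hx' : ∀ g, conjRep σ ρ g (σ.symm x) = σ.symm x := fun g => by
      rw [conjRep_apply, σ.apply_symm_apply, hx g]
    obtain ⟨n, hn⟩ := AddSubgroup.exists_sub_zsmul_mem_of_mem_sup_zmultiples
      (mem_sup_of_forall_apply_eq hρ' hfix' hx')
    have h := hσ.apply_mem_Delta hn
    rw [map_sub, map_zsmul, σ.apply_symm_apply, hF] at h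
    exact ⟨n, h⟩

/-- For a smooth cubic surface `X/k` with a `k`-line `L`, the quotient
`Pic(X)/Δ` is a quotient of `ℤ/5`, generated by the class of a fibre
`X_O` (class `F = -KX - L`) of the conic bundle over a rational point:
`5F ∈ Δ` and every Galois-fixed class is congruent mod `Δ` to a multiple
of `F`. -/
theorem stmt9
    (ρ : G →* Multiplicative (AddAut (Fin 7 → ℤ)))
    (hlines : ∀ (g : G) (l : Fin 7 → ℤ), IsLineClass l → IsLineClass (Multiplicative.toAdd (ρ g) l))
    (hint : ∀ (g : G) (a b : Fin 7 → ℤ), picInter (Multiplicative.toAdd (ρ g) a) (Multiplicative.toAdd (ρ g) b) = picInter a b)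
    (hK : ∀ g : G, Multiplicative.toAdd (ρ g) KX = KX)
    (L : Fin 7 → ℤ) (hL : IsLineClass L) (hLfix : ∀ g : G, Multiplicative.toAdd (ρ g) L = L) :
    (5 : ℤ) • (-KX - L) ∈ Delta ρ ∧
      ∀ x ∈ fixedSubgroup ρ, ∃ n : ℤ, x - n • (-KX - L) ∈ Delta ρ :=
  stmt9_general ρ hint hK L hL hLfix
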